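/- arXiv:2410.18915 — 3 statements merged into one kernel-verified Lean document; each statement's English description precedes it below -/
import Mathlib

section
/- Assume Constraint I, i.e., r ≥ 3ℓ and d ≥ 4·√((r−ℓ)/(2ℓ))·ln(20/ε). Then δ ≤ ε/20, and for all x ∈ [ℓ, r], |Q(x) − 1| ≤ δ ≤ ε/20. -/
/-- The degree-`d` Chebyshev polynomial of the first kind, as a real function. -/
noncomputable def cheb : ℕ → ℝ → ℝ
  | 0, _ => 1
  | 1, x => x
  | (n+2), x => 2 * x * cheb (n+1) x - cheb n x

/-- `ψ(x) = (r+ℓ−2x)/(r−ℓ)`. -/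
noncomputable def psiMap (ℓ r x : ℝ) : ℝ := (r + ℓ - 2 * x) / (r - ℓ)

/-- `δ = 1 / T_d(1 + 2α/(1−α))` where `α = ℓ/r`. -/
noncomputable def cDelta (ℓ r : ℝ) (d : ℕ) : ℝ :=
  1 / cheb d (1 + 2 * (ℓ / r) / (1 - ℓ / r))

/-- `P_d(x) = −δ·T_d(ψ(x))`. -/
noncomputable def Pd (ℓ r : ℝ) (d : ℕ) (x : ℝ) : ℝ := - cDelta ℓ r d * cheb d (psiMap ℓ r x)

/-- `Q(x) = 1 + e^{−mx}·P_d(x)`. -/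
noncomputable def Qfun (ℓ r : ℝ) (d : ℕ) (m x : ℝ) : ℝ :=
  1 + Real.exp (-(m * x)) * Pd ℓ r d x

/-- `Q*(x) = 1 + P_d(x)` for `x < ℓ` and `1 − δ` for `x ≥ ℓ`. -/
noncomputable def Qstar (ℓ r : ℝ) (d : ℕ) (x : ℝ) : ℝ :=
  if x < ℓ then 1 + Pd ℓ r d x else 1 - cDelta ℓ r d

/-- Constraint I: `r ≥ 3ℓ` and `d ≥ 4·√((r−ℓ)/(2ℓ))·ln(20/ε)`. -/
def ConstraintI (ℓ r : ℝ) (d : ℕ) (ε : ℝ) : Prop :=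
  r ≥ 3 * ℓ ∧ (d : ℝ) ≥ 4 * Real.sqrt ((r - ℓ) / (2 * ℓ)) * Real.log (20 / ε)

/-- Constraint II: `m ≥ 5.5·d/(r−ℓ)`. -/
def ConstraintII (ℓ r : ℝ) (d : ℕ) (m : ℝ) : Prop :=
  m ≥ 5.5 * d / (r - ℓ)

/-- Constraint III: `m ≤ ε²n²/256` and
`d⁶·9^d·((r+ℓ)/(r−ℓ))^{2d−2} ≤ (1/4)·m·(r−ℓ)²·n²`. -/
def ConstraintIII (ℓ r : ℝ) (d : ℕ) (m ε : ℝ) (n : ℕ) : Prop :=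
  m ≤ ε ^ 2 * (n : ℝ) ^ 2 / 256 ∧
  (d : ℝ) ^ 6 * 9 ^ d * ((r + ℓ) / (r - ℓ)) ^ (2 * d - 2) ≤
    (1 / 4) * m * (r - ℓ) ^ 2 * (n : ℝ) ^ 2

/-- Constraint IV: `ℓ ≤ ε/(20n)`. -/
def ConstraintIV (ℓ ε : ℝ) (n : ℕ) : Prop := ℓ ≤ ε / (20 * n)

/-- Constraint IVb: `ℓ ≤ (1/3)·(ε/n)·log₂(1/ε)`. -/
def ConstraintIVb (ℓ ε : ℝ) (n : ℕ) : Prop :=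
  ℓ ≤ (1 / 3) * (ε / n) * Real.logb 2 (1 / ε)

/-- A probability distribution over `ℕ`: a nonnegative sequence summing to `1`. -/
def IsDist (p : ℕ → ℝ) : Prop := (∀ i, 0 ≤ p i) ∧ ∑' i, p i = 1

/-- Total variation distance `(1/2)·Σᵢ|p_i − q_i|`. -/
noncomputable def dTV (p q : ℕ → ℝ) : ℝ := (1 / 2) * ∑' i, |p i - q i|

/-- `p` is `ε`-far from having support size at most `n`. -/
def FarFromSuppSize (ε : ℝ) (n : ℕ) (p : ℕ → ℝ) : Prop :=
  ∀ q : ℕ → ℝ, IsDist q → {i | q i ≠ 0}.encard ≤ n → dTV p q > ε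

/-- `Φ(λ) = (1 + ε/(λ·ℓ·n))·Q*(λ·ℓ)`. -/
noncomputable def Phi (ℓ r : ℝ) (d : ℕ) (ε : ℝ) (n : ℕ) (lam : ℝ) : ℝ :=
  (1 + ε / (lam * ℓ * n)) * Qstar ℓ r d (lam * ℓ)

lemma cheb_cos (n : ℕ) (θ : ℝ) : cheb n (Real.cos θ) = Real.cos (n * θ) := by
  induction n using Nat.twoStepInduction with
  | zero => simp [cheb]
  | one => simp [cheb]
  | more n ih1 ih2 =>
    show 2 * Real.cos θ * cheb (n+1) (Real.cos θ) - cheb n (Real.cos θ) = _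
    rw [ih1, ih2]
    push_cast
    rw [show ((n:ℝ)+2) * θ = ((n:ℝ)+1)*θ + θ by ring,
        show (n:ℝ) * θ = ((n:ℝ)+1)*θ - θ by ring, Real.cos_add, Real.cos_sub]
    ring

lemma abs_cheb_le (n : ℕ) {y : ℝ} (hy : |y| ≤ 1) : |cheb n y| ≤ 1 := by
  obtain ⟨h1, h2⟩ := abs_le.1 hy
  have := Real.cos_arccos h1 h2
  rw [← this, cheb_cos]
  exact Real.abs_cos_le_one _

lemma cheb_closed (z u v : ℝ) (huv : u * v = 1) (hsum : u + v = 2 * z) (n : ℕ) :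
    cheb n z = (u^n + v^n)/2 := by
  have hz : z = (u + v)/2 := by linarith
  subst hz
  induction n using Nat.twoStepInduction with
  | zero => simp [cheb]
  | one => simp [cheb]
  | more n ih1 ih2 =>
    show 2 * ((u+v)/2) * cheb (n+1) _ - cheb n _ = _
    rw [ih1, ih2]
    linear_combination ((u^n + v^n)/2) * huv

lemma cheb_ge {z : ℝ} (hz : 1 ≤ z) (n : ℕ) :
    (z + Real.sqrt (z^2 - 1))^n / 2 ≤ cheb n z := by
  set s := Real.sqrt (z^2 - 1) with hs
  have hs0 : 0 ≤ s := Real.sqrt_nonneg _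
  have hs2 : s^2 = z^2 - 1 := Real.sq_sqrt (by nlinarith)
  have hsz : s ≤ z := by nlinarith
  have h := cheb_closed z (z+s) (z-s) (by nlinarith) (by ring) n
  rw [h]
  have : (0:ℝ) ≤ (z-s)^n := pow_nonneg (by linarith) n
  linarith

lemma log_one_add_ge {b : ℝ} (hb0 : 0 ≤ b) (hb : b ≤ 3/2) : b/2 ≤ Real.log (1 + 2*b) := by
  rw [Real.le_log_iff_exp_le (by linarith)]
  have h1 := Real.add_one_le_exp (-(b/2))
  rw [Real.exp_neg] at h1
  have hepos := Real.exp_pos (b/2)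
  have h1' : Real.exp (b/2) * (1 - b/2) ≤ 1 := by
    have := mul_le_mul_of_nonneg_left h1 hepos.le
    rw [mul_inv_cancel₀ hepos.ne'] at this
    linarith [this]
  nlinarith [mul_nonneg (mul_nonneg hb0 hb0) hepos.le]


lemma arith1 {b : ℝ} (h0 : 0 ≤ b) (h : b^2 ≤ 1/2) : b ≤ 3/2 := by nlinarith

lemma arith2 (b : ℝ) : (2*b)^2 ≤ (1 + 2*b^2)^2 - 1 := by nlinarith [sq_nonneg b, sq_nonneg (b^2)]

lemma arith3 {D c L β G l2 l20 : ℝ} (hD : 1 ≤ D) (hβ : 0 < β) (hc : 0.7 ≤ c)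
    (hL : 0 < L) (h1 : 4*c*L ≤ D*β) (h2 : β/2 ≤ G) (h3 : l2 ≤ 0.4*l20) (h4 : l20 ≤ L)
    (h5 : 0 < l20) : l2 + L ≤ D * G := by
  nlinarith [mul_le_mul_of_nonneg_right hc hL.le, mul_le_mul_of_nonneg_left h2 (by linarith : (0:ℝ) ≤ D)]

lemma arith4 {e a c : ℝ} (he0 : 0 ≤ e) (he1 : e ≤ 1) (ha : 0 ≤ a) (hc0 : 0 ≤ c)
    (hc1 : c ≤ 1) : e * (a * c) ≤ a :=
  calc e * (a * c) ≤ 1 * (a * c) := mul_le_mul_of_nonneg_right he1 (mul_nonneg ha hc0)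
    _ = a * c := one_mul _
    _ ≤ a * 1 := mul_le_mul_of_nonneg_left hc1 ha
    _ = a := mul_one _

lemma sqrt_half_ge : (0.7:ℝ) ≤ Real.sqrt (1/2) := by
  have h1 : Real.sqrt (1/2) ^ 2 = 1/2 := Real.sq_sqrt (by norm_num)
  nlinarith [Real.sqrt_nonneg (1/2:ℝ)]

set_option maxHeartbeats 1000000 in
/-- Under Constraint I, `δ ≤ ε/20`, and for all `x ∈ [ℓ, r]`,
`|Q(x) − 1| ≤ δ ≤ ε/20`. -/
theorem constraintI_implies_delta_small (ℓ r : ℝ) (hℓ : 0 < ℓ) (hℓr : ℓ < r) (hr : r ≤ 1)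
    (d : ℕ) (hd : 1 ≤ d) (m : ℝ) (hm : 0 ≤ m) (ε : ℝ) (hε0 : 0 < ε) (hε1 : ε < 1)
    (hCI : ConstraintI ℓ r d ε) :
    cDelta ℓ r d ≤ ε / 20 ∧
      ∀ x ∈ Set.Icc ℓ r, |Qfun ℓ r d m x - 1| ≤ cDelta ℓ r d := by
  obtain ⟨hC1, hC2⟩ := hCI
  have hr0 : 0 < r := hℓ.trans hℓr
  obtain ⟨α, hαdef⟩ : ∃ a : ℝ, a = ℓ / r := ⟨_, rfl⟩
  have hα0 : 0 < α := hαdef ▸ div_pos hℓ hr0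
  have hα3 : α ≤ 1/3 := by rw [hαdef, div_le_iff₀ hr0]; linarith
  have h1α : 0 < 1 - α := by linarith
  obtain ⟨z, hzdef⟩ : ∃ a : ℝ, a = 1 + 2 * α / (1 - α) := ⟨_, rfl⟩
  have ht0 : 0 ≤ 2 * α / (1 - α) := by positivity
  have hz1 : 1 ≤ z := by rw [hzdef]; linarith
  obtain ⟨β, hβdef⟩ : ∃ a : ℝ, a = Real.sqrt (α / (1 - α)) := ⟨_, rfl⟩
  have hβ0 : 0 < β := hβdef ▸ Real.sqrt_pos.2 (div_pos hα0 h1α)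
  have hβ2 : β^2 = α / (1 - α) := hβdef ▸ Real.sq_sqrt (by positivity)
  have hβ32 : β ≤ 3/2 := by
    refine arith1 hβ0.le ?_
    rw [hβ2, div_le_iff₀ h1α]; linarith
  obtain ⟨s, hsdef⟩ : ∃ a : ℝ, a = Real.sqrt (z^2 - 1) := ⟨_, rfl⟩
  have htβ : 2 * α / (1 - α) = 2 * β^2 := by rw [hβ2]; ring
  have hs2β : 2 * β ≤ s := by
    rw [hsdef, show (2:ℝ) * β = Real.sqrt ((2*β)^2) from (Real.sqrt_sq (by positivity)).symm]
    apply Real.sqrt_le_sqrt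
    rw [hzdef, htβ]; exact arith2 β
  obtain ⟨u, hudef⟩ : ∃ a : ℝ, a = z + s := ⟨_, rfl⟩
  have hu : 1 + 2 * β ≤ u := by rw [hudef]; linarith
  have hu1 : (1:ℝ) < u := by linarith
  obtain ⟨L, hLdef⟩ : ∃ a : ℝ, a = Real.log (20 / ε) := ⟨_, rfl⟩
  have h20 : (20:ℝ) ≤ 20 / ε := by rw [le_div_iff₀ hε0]; nlinarith [hε1, hε0]
  have hL20 : Real.log 20 ≤ L := hLdef ▸ Real.log_le_log (by norm_num) h20
  have hlog20 : Real.log 2 ≤ 0.4 * Real.log 20 := by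
    have h16 : Real.log 16 ≤ Real.log 20 := Real.log_le_log (by norm_num) (by norm_num)
    have h16' : Real.log 16 = 4 * Real.log 2 := by
      rw [show (16:ℝ) = 2^4 by norm_num, Real.log_pow]; push_cast; ring
    have hl2 : 0 < Real.log 2 := Real.log_pos (by norm_num)
    linarith
  have hL0 : 0 < L := lt_of_lt_of_le (Real.log_pos (by norm_num)) hL20
  have hkey : Real.sqrt ((r - ℓ) / (2 * ℓ)) * β = Real.sqrt (1/2) := by
    rw [hβdef, ← Real.sqrt_mul (div_nonneg (by linarith) (by linarith))]
    congr 1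
    have hrℓ : r - ℓ ≠ 0 := sub_ne_zero_of_ne hℓr.ne'
    rw [hαdef]
    have e1 : (1:ℝ) - ℓ / r = (r - ℓ) / r := by field_simp
    rw [e1]
    field_simp
  have hdβ : 4 * Real.sqrt (1/2) * L ≤ (d:ℝ) * β := by
    have h := mul_le_mul_of_nonneg_right (hLdef ▸ hC2) hβ0.le
    calc 4 * Real.sqrt (1/2) * L = 4 * Real.sqrt ((r - ℓ) / (2 * ℓ)) * L * β := by
          rw [← hkey]; ring
      _ ≤ (d:ℝ) * β := h
  have hc : (0.7:ℝ) ≤ Real.sqrt (1/2) := sqrt_half_ge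
  have hlogu : β / 2 ≤ Real.log u :=
    le_trans (log_one_add_ge hβ0.le hβ32) (Real.log_le_log (by linarith) hu)
  have hdlogu : Real.log 2 + L ≤ (d:ℝ) * Real.log u :=
    arith3 (by exact_mod_cast hd) hβ0 hc hL0 hdβ hlogu hlog20 hL20 (Real.log_pos (by norm_num))
  have hu0 : (0:ℝ) < u := by linarith
  have hupow : 40 / ε ≤ u ^ d := by
    have h40 : (0:ℝ) < 40 / ε := by positivity
    rw [← Real.log_le_log_iff h40 (pow_pos hu0 d), Real.log_pow]
    have he : Real.log (40 / ε) = Real.log 2 + L := by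
      rw [hLdef, show (40:ℝ)/ε = 2 * (20/ε) by ring,
        Real.log_mul (by norm_num) (by positivity)]
    rw [he]; exact hdlogu
  have hcheb : 20 / ε ≤ cheb d z := by
    have h := cheb_ge hz1 d
    rw [← hsdef, ← hudef] at h
    have he : 40 / ε = 2 * (20 / ε) := by ring
    linarith
  have hchebpos : 0 < cheb d z := lt_of_lt_of_le (by positivity) hcheb
  have hδdef : cDelta ℓ r d = 1 / cheb d z := by rw [cDelta, hzdef, hαdef]
  have hδε : cDelta ℓ r d ≤ ε / 20 := by
    rw [hδdef, show ε / 20 = 1 / (20 / ε) by field_simp]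
    exact one_div_le_one_div_of_le (by positivity) hcheb
  have hδ0 : 0 ≤ cDelta ℓ r d := by rw [hδdef]; positivity
  refine ⟨hδε, fun x hx => ?_⟩
  obtain ⟨hxl, hxr⟩ := hx
  have hrl : 0 < r - ℓ := by linarith
  have hψ : |psiMap ℓ r x| ≤ 1 := by
    apply abs_le.2
    constructor
    · rw [psiMap, le_div_iff₀ hrl]; linarith
    · rw [psiMap, div_le_one hrl]; linarith
  have hcψ : |cheb d (psiMap ℓ r x)| ≤ 1 := abs_cheb_le d hψ
  have hexp1 : Real.exp (-(m * x)) ≤ 1 := by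
    rw [Real.exp_le_one_iff]
    have : 0 ≤ m * x := mul_nonneg hm (by linarith)
    linarith
  have heq : Qfun ℓ r d m x - 1 =
      Real.exp (-(m * x)) * (- cDelta ℓ r d * cheb d (psiMap ℓ r x)) := by
    simp [Qfun, Pd]
  rw [heq, abs_mul, abs_mul, abs_neg, abs_of_nonneg hδ0, Real.abs_exp]
  exact arith4 (Real.exp_pos _).le hexp1 hδ0 (abs_nonneg _) hcψ
end

section
/- Assume Constraint II, i.e., m ≥ 5.5·d/(r−ℓ). Then for all x ∈ (r, 1], |1 − Q(x)| ≤ δ. -/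
lemma cheb_ge_one_mono (y : ℝ) (hy : 1 ≤ y) :
    ∀ n, 1 ≤ cheb n y ∧ cheb n y ≤ cheb (n+1) y := by
  intro n
  induction n with
  | zero => exact ⟨le_refl _, by simpa [cheb] using hy⟩
  | succ k ih =>
    obtain ⟨h1, h2⟩ := ih
    have h1' : 1 ≤ cheb (k+1) y := le_trans h1 h2
    have heq : cheb (k+2) y = 2 * y * cheb (k+1) y - cheb k y := by simp [cheb]
    constructor
    · exact h1'
    · rw [heq]; nlinarith

lemma cheb_ge_one (n : ℕ) (y : ℝ) (hy : 1 ≤ y) : 1 ≤ cheb n y :=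
  (cheb_ge_one_mono y hy n).1

lemma cheb_le_pow (y : ℝ) (hy : 1 ≤ y) :
    ∀ n, cheb n y ≤ (2*y)^n ∧ cheb (n+1) y ≤ (2*y)^(n+1) := by
  intro n
  induction n with
  | zero =>
    refine ⟨by simp [cheb], ?_⟩
    simp only [cheb, zero_add, pow_one]
    linarith
  | succ k ih =>
    obtain ⟨h1, h2⟩ := ih
    refine ⟨h2, ?_⟩
    have heq : cheb (k+2) y = 2 * y * cheb (k+1) y - cheb k y := by simp [cheb]
    have hk1 : 1 ≤ cheb k y := cheb_ge_one k y hy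
    have : (2*y)^(k+2) = 2*y*(2*y)^(k+1) := by ring
    rw [heq, this]
    nlinarith

lemma cheb_neg (x : ℝ) : ∀ n, cheb n (-x) = (-1)^n * cheb n x ∧
    cheb (n+1) (-x) = (-1)^(n+1) * cheb (n+1) x := by
  intro n
  induction n with
  | zero => refine ⟨by simp [cheb], by simp [cheb]⟩
  | succ k ih =>
    obtain ⟨h1, h2⟩ := ih
    refine ⟨h2, ?_⟩
    have heq : cheb (k+2) (-x) = 2 * (-x) * cheb (k+1) (-x) - cheb k (-x) := by simp [cheb]
    have heq' : cheb (k+2) x = 2 * x * cheb (k+1) x - cheb k x := by simp [cheb]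
    rw [heq, heq', h1, h2]
    ring

/-- Under Constraint II, for all `x ∈ (r, 1]`, `|1 − Q(x)| ≤ δ`. -/
theorem right_tail_bound (ℓ r : ℝ) (hℓ : 0 < ℓ) (hℓr : ℓ < r) (hr : r ≤ 1)
    (d : ℕ) (hd : 1 ≤ d) (m : ℝ) (hm : 0 ≤ m) (ε : ℝ) (hε0 : 0 < ε) (hε1 : ε < 1)
    (hCII : ConstraintII ℓ r d m) :
    ∀ x ∈ Set.Ioc r 1, |1 - Qfun ℓ r d m x| ≤ cDelta ℓ r d := by
  intro x hx
  obtain ⟨hxr, hx1⟩ := hx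
  have hrpos : 0 < r := lt_trans hℓ hℓr
  have htpos : 0 < r - ℓ := by linarith
  have hxpos : 0 < x := lt_trans hrpos hxr
  -- δ > 0
  have h1a : 0 < 1 - ℓ/r := by
    rw [sub_pos]; exact (div_lt_one hrpos).mpr hℓr
  have hy0 : (1:ℝ) ≤ 1 + 2*(ℓ/r)/(1 - ℓ/r) := by
    have : 0 ≤ 2*(ℓ/r)/(1 - ℓ/r) := by positivity
    linarith
  have hchpos : 0 < cheb d (1 + 2*(ℓ/r)/(1 - ℓ/r)) :=
    lt_of_lt_of_le one_pos (cheb_ge_one d _ hy0)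
  have hδpos : 0 < cDelta ℓ r d := by
    unfold cDelta
    positivity
  set y : ℝ := (2*x - r - ℓ)/(r - ℓ) with hyd
  have hy1 : 1 ≤ y := by
    rw [hyd, le_div_iff₀ htpos]; linarith
  have hpsi : psiMap ℓ r x = -y := by
    rw [hyd]; unfold psiMap
    field_simp
    ring
  have habs : |cheb d (psiMap ℓ r x)| = cheb d y := by
    rw [hpsi, (cheb_neg y d).1, abs_mul, abs_pow, abs_neg, abs_one, one_pow, one_mul,
      abs_of_nonneg (le_trans zero_le_one (cheb_ge_one d y hy1))]
  -- key exponential bound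
  have h2y : 2*y ≤ Real.exp (5.5 * x / (r - ℓ)) := by
    have hz : 0 < x / (r - ℓ) := by positivity
    have h1 : 2*y ≤ 4 * (x / (r - ℓ)) := by
      rw [hyd, show 4*(x/(r-ℓ)) = (4*x)/(r-ℓ) from by ring,
        show 2*((2*x-r-ℓ)/(r-ℓ)) = (4*x-2*r-2*ℓ)/(r-ℓ) from by ring,
        div_le_div_iff₀ htpos htpos]
      nlinarith
    have h2 : 4 * (x / (r - ℓ)) ≤ 1 + 5.5 * (x / (r - ℓ)) := by nlinarith
    have h3 : 1 + 5.5 * (x / (r - ℓ)) ≤ Real.exp (5.5 * (x / (r - ℓ))) := by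
      linarith [Real.add_one_le_exp (5.5 * (x / (r - ℓ)))]
    have : 5.5 * (x / (r - ℓ)) = 5.5 * x / (r - ℓ) := by ring
    linarith [this ▸ h3]
  have hcheb_le : cheb d y ≤ Real.exp (m * x) := by
    have h1 : cheb d y ≤ (2*y)^d := (cheb_le_pow y hy1 d).1
    have h2ypos : 0 < 2*y := by linarith
    have h2 : (2*y)^d ≤ (Real.exp (5.5 * x / (r - ℓ)))^d :=
      pow_le_pow_left₀ (le_of_lt h2ypos) h2y d
    have h3 : (Real.exp (5.5 * x / (r - ℓ)))^d = Real.exp (d * (5.5 * x / (r - ℓ))) := by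
      rw [← Real.exp_nat_mul]
    have h4 : (d:ℝ) * (5.5 * x / (r - ℓ)) ≤ m * x := by
      have hcii : 5.5 * d / (r - ℓ) ≤ m := hCII
      have : (d:ℝ) * (5.5 * x / (r - ℓ)) = (5.5 * d / (r - ℓ)) * x := by ring
      rw [this]
      exact mul_le_mul_of_nonneg_right hcii (le_of_lt hxpos)
    calc cheb d y ≤ (2*y)^d := h1
      _ ≤ Real.exp (d * (5.5 * x / (r - ℓ))) := by rw [← h3]; exact h2
      _ ≤ Real.exp (m * x) := Real.exp_le_exp.mpr h4
  -- assemble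
  have hq : 1 - Qfun ℓ r d m x = Real.exp (-(m*x)) * (cDelta ℓ r d * cheb d (psiMap ℓ r x)) := by
    unfold Qfun Pd; ring
  rw [hq, abs_mul, abs_mul, abs_of_nonneg (Real.exp_nonneg _),
    abs_of_nonneg (le_of_lt hδpos), habs]
  have hfinal : Real.exp (-(m*x)) * cheb d y ≤ 1 := by
    have := mul_le_mul_of_nonneg_left hcheb_le (Real.exp_nonneg (-(m*x)))
    rwa [← Real.exp_add, neg_add_cancel, Real.exp_zero] at this
  calc Real.exp (-(m*x)) * (cDelta ℓ r d * cheb d y)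
      = cDelta ℓ r d * (Real.exp (-(m*x)) * cheb d y) := by ring
    _ ≤ cDelta ℓ r d * 1 := mul_le_mul_of_nonneg_left hfinal (le_of_lt hδpos)
    _ = cDelta ℓ r d := mul_one _
end

section
/- Let n ≥ 1 be an integer and let p = (p_1, p_2, …) be a probability distribution over the positive integers (p_i ≥ 0, Σᵢ p_i = 1) that is nonincreasing (p_1 ≥ p_2 ≥ ⋯) and satisfies p_n > 0. Let μ := Σ_{i > n} p_i. Then Σᵢ Q*(p_i) ≥ (n + μ/p_n)·Q*(p_n). -/
open Set

lemma cheb_step (n : ℕ) (x : ℝ) : cheb (n+2) x = 2 * x * cheb (n+1) x - cheb n x := rfl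

lemma cheb_at_one : ∀ n : ℕ, cheb n 1 = 1 := by
  have key : ∀ n : ℕ, cheb n 1 = 1 ∧ cheb (n+1) 1 = 1 := by
    intro n
    induction n with
    | zero => exact ⟨rfl, rfl⟩
    | succ k ih => exact ⟨ih.2, by rw [cheb_step]; rw [ih.1, ih.2]; ring⟩
  exact fun n => (key n).1

lemma cheb_props : ∀ n : ℕ,
    (MonotoneOn (cheb n) (Ici 1) ∧ ConvexOn ℝ (Ici 1) (cheb n) ∧ ∀ x, 1 ≤ x → 1 ≤ cheb n x) ∧
    (MonotoneOn (fun x => cheb (n+1) x - cheb n x) (Ici 1) ∧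
     ConvexOn ℝ (Ici 1) (fun x => cheb (n+1) x - cheb n x) ∧
     ∀ x, 1 ≤ x → 0 ≤ cheb (n+1) x - cheb n x) := by
  intro n
  induction n with
  | zero =>
    constructor
    · have h0 : cheb 0 = fun _ : ℝ => (1:ℝ) := funext fun x => rfl
      rw [h0]
      exact ⟨monotoneOn_const, convexOn_const 1 (convex_Ici 1), fun x _ => le_refl 1⟩
    · have h1 : (fun x : ℝ => cheb 1 x - cheb 0 x) = fun x : ℝ => x - 1 := funext fun x => rfl
      rw [h1]
      refine ⟨?_, ?_, ?_⟩
      · intro a _ b _ hab; simpa using hab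
      · exact (convexOn_id (convex_Ici 1)).sub (concaveOn_const 1 (convex_Ici 1))
      · intro x hx
        have e : cheb (0+1) x - cheb 0 x = x - 1 := rfl
        rw [e]; linarith
  | succ k ih =>
    obtain ⟨⟨Hm, Hc, Hb⟩, Dm, Dc, Db⟩ := ih
    have hsucc_mono : MonotoneOn (cheb (k+1)) (Ici 1) := by
      have : cheb (k+1) = fun x => cheb k x + (cheb (k+1) x - cheb k x) := by
        funext x; ring
      rw [this]; exact Hm.add Dm
    have hsucc_conv : ConvexOn ℝ (Ici 1) (cheb (k+1)) := by
      have : cheb (k+1) = fun x => cheb k x + (cheb (k+1) x - cheb k x) := by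
        funext x; ring
      rw [this]; exact Hc.add Dc
    have hsucc_bd : ∀ x, 1 ≤ x → 1 ≤ cheb (k+1) x := by
      intro x hx
      have := Hb x hx; have := Db x hx; linarith
    have heq : (fun x : ℝ => cheb (k+1+1) x - cheb (k+1) x)
        = fun x => (2*(x-1)) * cheb (k+1) x + (cheb (k+1) x - cheb k x) := by
      funext x; rw [show cheb (k+1+1) x = 2*x*cheb (k+1) x - cheb k x from rfl]; ring
    refine ⟨⟨hsucc_mono, hsucc_conv, hsucc_bd⟩, ?_, ?_, ?_⟩
    · -- monotone
      rw [heq]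
      have qm : MonotoneOn (fun x : ℝ => (2*(x-1)) * cheb (k+1) x) (Ici 1) := by
        intro a ha b hb hab
        simp only []
        have h1 : (0:ℝ) ≤ 2*(a-1) := by simp at ha; linarith
        have h2 : (0:ℝ) ≤ 2*(b-1) := by simp at hb; linarith
        have h3 : 1 ≤ cheb (k+1) a := hsucc_bd a (by simpa using ha)
        have h4 : cheb (k+1) a ≤ cheb (k+1) b := hsucc_mono ha hb hab
        nlinarith
      exact qm.add Dm
    · rw [heq]
      have fconv : ConvexOn ℝ (Ici 1) (fun x : ℝ => 2*(x-1)) := by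
        have : (fun x : ℝ => 2*(x-1)) = fun x : ℝ => 2*x + (-2) := by funext x; ring
        rw [this]
        exact (ConvexOn.smul (by norm_num) (convexOn_id (convex_Ici 1))).add_const (-2)
      have fmono : MonotoneOn (fun x : ℝ => 2*(x-1)) (Ici 1) := by
        intro a _ b _ hab; simp only []; linarith
      have qc : ConvexOn ℝ (Ici 1) ((fun x : ℝ => 2*(x-1)) * cheb (k+1)) := by
        apply fconv.mul hsucc_conv
        · intro x hx; simp at hx; simp; linarith
        · intro x hx; simp at hx; have := hsucc_bd x hx; linarith
        · intro a ha b hb hlt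
          rcases le_total a b with h | h
          · exact fmono ha hb h
          · exact absurd (hsucc_mono hb ha h) (not_le.mpr hlt)
      have : ((fun x : ℝ => 2*(x-1)) * cheb (k+1)) = fun x : ℝ => (2*(x-1)) * cheb (k+1) x := rfl
      rw [this] at qc
      exact qc.add Dc
    · -- nonneg
      intro x hx
      have e : cheb (k+1+1) x - cheb (k+1) x = (2*(x-1)) * cheb (k+1) x + (cheb (k+1) x - cheb k x) := by
        rw [show cheb (k+1+1) x = 2*x*cheb (k+1) x - cheb k x from rfl]; ring
      rw [e]
      have h1 : (0:ℝ) ≤ 2*(x-1) := by linarith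
      have h2 : 1 ≤ cheb (k+1) x := hsucc_bd x hx
      have h3 := Db x hx
      nlinarith

lemma cheb_mono (n : ℕ) : MonotoneOn (cheb n) (Ici 1) := (cheb_props n).1.1
lemma cheb_conv (n : ℕ) : ConvexOn ℝ (Ici 1) (cheb n) := (cheb_props n).1.2.1
lemma cheb_ge_one_s13 (n : ℕ) {x : ℝ} (hx : 1 ≤ x) : 1 ≤ cheb n x := (cheb_props n).1.2.2 x hx

lemma cheb_lip (M : ℝ) (hM : 1 ≤ M) : ∀ n : ℕ, ∃ L : ℝ, 0 ≤ L ∧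
    (∀ a b, 1 ≤ a → a ≤ b → b ≤ M → cheb n b - cheb n a ≤ L * (b - a)) ∧
    (∀ a b, 1 ≤ a → a ≤ b → b ≤ M → cheb (n+1) b - cheb (n+1) a ≤ L * (b - a)) := by
  intro n
  induction n with
  | zero =>
    refine ⟨1, by norm_num, ?_, ?_⟩
    · intro a b ha hab hbM
      have e1 : cheb 0 b = 1 := rfl
      have e2 : cheb 0 a = 1 := rfl
      rw [e1, e2]; linarith
    · intro a b ha hab hbM
      have e1 : cheb 1 b = b := rfl
      have e2 : cheb 1 a = a := rfl
      rw [e1, e2]; linarith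
  | succ k ih =>
    obtain ⟨L, hL0, hLk, hLk1⟩ := ih
    refine ⟨2 * cheb (k+1) M + 2*M*L, by nlinarith [cheb_ge_one_s13 (k+1) hM], ?_, ?_⟩
    · intro a b ha hab hbM
      refine le_trans (hLk1 a b ha hab hbM) ?_
      have : 0 ≤ b - a := by linarith
      have hC : 1 ≤ cheb (k+1) M := cheb_ge_one_s13 (k+1) hM
      nlinarith [mul_nonneg (mul_nonneg hL0 (by linarith : (0:ℝ) ≤ 2*M - 1)) this,
        mul_nonneg (by linarith : (0:ℝ) ≤ 2*cheb (k+1) M) this]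
    intro a b ha hab hbM
    have e : cheb (k+1+1) b - cheb (k+1+1) a
        = 2*(b-a)*cheb (k+1) b + 2*a*(cheb (k+1) b - cheb (k+1) a) - (cheb k b - cheb k a) := by
      rw [show cheb (k+1+1) b = 2*b*cheb (k+1) b - cheb k b from rfl,
          show cheb (k+1+1) a = 2*a*cheb (k+1) a - cheb k a from rfl]
      ring
    rw [e]
    have h1 : cheb (k+1) b ≤ cheb (k+1) M :=
      cheb_mono (k+1) (mem_Ici.mpr (le_trans ha hab)) (mem_Ici.mpr hM) hbM
    have h2 : cheb (k+1) b - cheb (k+1) a ≤ L * (b - a) := hLk1 a b ha hab hbM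
    have h3 : 0 ≤ cheb k b - cheb k a :=
      sub_nonneg.mpr (cheb_mono k (mem_Ici.mpr ha) (mem_Ici.mpr (le_trans ha hab)) hab)
    have h4 : 0 ≤ cheb (k+1) b - cheb (k+1) a :=
      sub_nonneg.mpr (cheb_mono (k+1) (mem_Ici.mpr ha) (mem_Ici.mpr (le_trans ha hab)) hab)
    have haM : a ≤ M := le_trans hab hbM
    have ha0 : 0 < a := lt_of_lt_of_le one_pos ha
    nlinarith [mul_le_mul_of_nonneg_left h2 (le_of_lt ha0)]

section QstarLemmas
variable {ℓ r : ℝ} {d : ℕ}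

lemma delta_eq (hℓ : 0 < ℓ) (hℓr : ℓ < r) :
    cDelta ℓ r d = 1 / cheb d ((r + ℓ) / (r - ℓ)) := by
  have hr : 0 < r := lt_trans hℓ hℓr
  have harg : 1 + 2 * (ℓ / r) / (1 - ℓ / r) = (r + ℓ) / (r - ℓ) := by
    have h1 : (1 : ℝ) - ℓ / r ≠ 0 := by
      have : ℓ / r < 1 := (div_lt_one hr).mpr hℓr
      linarith
    have h2 : r - ℓ ≠ 0 := by linarith
    field_simp
    ring
  rw [cDelta, harg]

lemma u0_gt_one (hℓ : 0 < ℓ) (hℓr : ℓ < r) : 1 < (r + ℓ) / (r - ℓ) := by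
  have h : 0 < r - ℓ := by linarith
  rw [lt_div_iff₀ h]; linarith

lemma delta_pos (hℓ : 0 < ℓ) (hℓr : ℓ < r) : 0 < cDelta ℓ r d := by
  rw [delta_eq hℓ hℓr]
  have := cheb_ge_one_s13 d (le_of_lt (u0_gt_one hℓ hℓr))
  positivity

lemma delta_le_one (hℓ : 0 < ℓ) (hℓr : ℓ < r) : cDelta ℓ r d ≤ 1 := by
  rw [delta_eq hℓ hℓr]
  have h := cheb_ge_one_s13 d (le_of_lt (u0_gt_one hℓ hℓr))
  rw [div_le_one (by linarith)]; exact h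

lemma delta_mul_T (hℓ : 0 < ℓ) (hℓr : ℓ < r) :
    cDelta ℓ r d * cheb d ((r + ℓ) / (r - ℓ)) = 1 := by
  rw [delta_eq hℓ hℓr]
  have h := cheb_ge_one_s13 d (le_of_lt (u0_gt_one hℓ hℓr))
  field_simp

lemma psi_bounds (hℓ : 0 < ℓ) (hℓr : ℓ < r) {x : ℝ} (hx0 : 0 ≤ x) (hxl : x ≤ ℓ) :
    1 ≤ psiMap ℓ r x ∧ psiMap ℓ r x ≤ (r + ℓ) / (r - ℓ) := by
  have h : 0 < r - ℓ := by linarith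
  constructor
  · rw [psiMap, le_div_iff₀ h]; linarith
  · rw [psiMap, div_le_div_iff₀ h h]; nlinarith

lemma qstar_eq (hℓ : 0 < ℓ) (hℓr : ℓ < r) {x : ℝ} (hxl : x ≤ ℓ) :
    Qstar ℓ r d x = 1 - cDelta ℓ r d * cheb d (psiMap ℓ r x) := by
  rcases lt_or_eq_of_le hxl with h | h
  · rw [Qstar, if_pos h, Pd]; ring
  · subst h
    rw [Qstar, if_neg (lt_irrefl x)]
    have hpsi : psiMap x r x = 1 := by
      rw [psiMap]
      have : r - x ≠ 0 := by linarith
      field_simp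
      ring
    rw [hpsi, cheb_at_one]
    ring

lemma qstar_zero (hℓ : 0 < ℓ) (hℓr : ℓ < r) : Qstar ℓ r d 0 = 0 := by
  rw [qstar_eq hℓ hℓr (le_of_lt hℓ)]
  have hpsi : psiMap ℓ r 0 = (r + ℓ) / (r - ℓ) := by rw [psiMap]; ring_nf
  rw [hpsi, delta_mul_T hℓ hℓr]
  ring

lemma psi_anti (hℓ : 0 < ℓ) (hℓr : ℓ < r) {x y : ℝ} (hxy : x ≤ y) :
    psiMap ℓ r y ≤ psiMap ℓ r x := by
  have h : 0 < r - ℓ := by linarith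
  rw [psiMap, psiMap, div_le_div_iff₀ h h]
  nlinarith [mul_nonneg (by linarith : (0:ℝ) ≤ 2*(y-x)) (le_of_lt h)]

lemma qstar_mono (hℓ : 0 < ℓ) (hℓr : ℓ < r) {x y : ℝ} (hx : 0 ≤ x) (hxy : x ≤ y) :
    Qstar ℓ r d x ≤ Qstar ℓ r d y := by
  have hδ := delta_pos (d := d) hℓ hℓr
  rcases le_or_gt y ℓ with hy | hy
  · rw [qstar_eq hℓ hℓr (le_trans hxy hy), qstar_eq hℓ hℓr hy]
    have hbx := psi_bounds hℓ hℓr hx (le_trans hxy hy)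
    have hby := psi_bounds hℓ hℓr (le_trans hx hxy) hy
    have hyx : psiMap ℓ r y ≤ psiMap ℓ r x := psi_anti hℓ hℓr hxy
    have hc : cheb d (psiMap ℓ r y) ≤ cheb d (psiMap ℓ r x) :=
      cheb_mono d (Set.mem_Ici.mpr hby.1) (Set.mem_Ici.mpr (le_trans hby.1 hyx)) hyx
    nlinarith
  · have hy' : Qstar ℓ r d y = 1 - cDelta ℓ r d := by
      rw [Qstar, if_neg (not_lt.mpr (le_of_lt hy))]
    rw [hy']
    rcases le_or_gt x ℓ with hx' | hx'
    · rw [qstar_eq hℓ hℓr hx']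
      have hbx := psi_bounds hℓ hℓr hx hx'
      have hc : 1 ≤ cheb d (psiMap ℓ r x) := cheb_ge_one_s13 d hbx.1
      nlinarith
    · rw [Qstar, if_neg (not_lt.mpr (le_of_lt hx'))]

lemma qstar_nonneg (hℓ : 0 < ℓ) (hℓr : ℓ < r) {x : ℝ} (hx : 0 ≤ x) :
    0 ≤ Qstar ℓ r d x := by
  have := qstar_mono (d := d) hℓ hℓr (le_refl 0) hx
  rwa [qstar_zero hℓ hℓr] at this

lemma qstar_superlin_aux (hℓ : 0 < ℓ) (hℓr : ℓ < r) {x y : ℝ} (hx : 0 ≤ x) (hxy : x ≤ y)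
    (hy : 0 < y) (hyl : y ≤ ℓ) : x * Qstar ℓ r d y ≤ y * Qstar ℓ r d x := by
    set a := x / y with ha_def
    have ha0 : 0 ≤ a := div_nonneg hx (le_of_lt hy)
    have ha1 : a ≤ 1 := (div_le_one hy).mpr hxy
    have hxay : x = a * y := (div_mul_cancel₀ x (ne_of_gt hy)).symm
    have hxl : x ≤ ℓ := le_trans hxy hyl
    rw [qstar_eq hℓ hℓr hxl, qstar_eq hℓ hℓr hyl]
    have hby := psi_bounds hℓ hℓr (le_trans hx hxy) hyl
    have hb0 := psi_bounds hℓ hℓr (le_refl 0) (le_of_lt hℓ)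
    have hpsi0 : psiMap ℓ r 0 = (r + ℓ) / (r - ℓ) := by rw [psiMap]; ring_nf
    have hrl : (0:ℝ) < r - ℓ := by linarith
    have hpsix : psiMap ℓ r x = a * psiMap ℓ r y + (1 - a) * psiMap ℓ r 0 := by
      rw [psiMap, psiMap, psiMap]
      field_simp
      rw [hxay]; ring
    have hconv := (cheb_conv d).2 (Set.mem_Ici.mpr hby.1)
      (Set.mem_Ici.mpr (le_of_lt (lt_of_lt_of_le (u0_gt_one hℓ hℓr) (le_of_eq hpsi0.symm))))
      ha0 (by linarith : (0:ℝ) ≤ 1 - a) (by ring)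
    try simp only [smul_eq_mul] at hconv
    rw [← hpsix] at hconv
    -- hconv : cheb d (psiMap ℓ r x) ≤ a * cheb d (psiMap ℓ r y) + (1-a) * cheb d (psiMap ℓ r 0)
    have hT : cDelta ℓ r d * cheb d (psiMap ℓ r 0) = 1 := by
      rw [hpsi0]; exact delta_mul_T hℓ hℓr
    have hδ := delta_pos (d := d) hℓ hℓr
    -- goal : x * (1 - δ * cheb (ψ y)) ≤ y * (1 - δ * cheb (ψ x))
    have key : 1 - cDelta ℓ r d * cheb d (psiMap ℓ r x) ≥
        a * (1 - cDelta ℓ r d * cheb d (psiMap ℓ r y)) := by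
      nlinarith [hconv, hT]
    calc x * (1 - cDelta ℓ r d * cheb d (psiMap ℓ r y))
        = y * (a * (1 - cDelta ℓ r d * cheb d (psiMap ℓ r y))) := by rw [hxay]; ring
      _ ≤ y * (1 - cDelta ℓ r d * cheb d (psiMap ℓ r x)) := by
          apply mul_le_mul_of_nonneg_left key (le_of_lt hy)

lemma qstar_superlin (hℓ : 0 < ℓ) (hℓr : ℓ < r) {x y : ℝ} (hx : 0 ≤ x) (hxy : x ≤ y)
    (hy : 0 < y) : x * Qstar ℓ r d y ≤ y * Qstar ℓ r d x := by
  rcases le_or_gt y ℓ with hyl | hyl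
  · exact qstar_superlin_aux hℓ hℓr hx hxy hy hyl
  · -- y > ℓ
    rcases le_or_gt x ℓ with hxl | hxl
    · have h1 : x * Qstar ℓ r d y ≤ x * Qstar ℓ r d ℓ := by
        apply mul_le_mul_of_nonneg_left ?_ hx
        rw [Qstar, if_neg (not_lt.mpr (le_of_lt hyl)), Qstar, if_neg (lt_irrefl ℓ)]
      have h2 : ℓ * Qstar ℓ r d x ≤ y * Qstar ℓ r d x := by
        apply mul_le_mul_of_nonneg_right (le_of_lt hyl) (qstar_nonneg hℓ hℓr hx)
      have h3 : x * Qstar ℓ r d ℓ ≤ ℓ * Qstar ℓ r d x :=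
        qstar_superlin_aux hℓ hℓr hx hxl hℓ (le_refl ℓ)
      linarith
    · have hxq : Qstar ℓ r d x = 1 - cDelta ℓ r d := by
        rw [Qstar, if_neg (not_lt.mpr (le_of_lt hxl))]
      have hyq : Qstar ℓ r d y = 1 - cDelta ℓ r d := by
        rw [Qstar, if_neg (not_lt.mpr (le_of_lt hyl))]
      rw [hxq, hyq]
      have := delta_le_one (d := d) hℓ hℓr
      nlinarith
end QstarLemmas

section Linear
variable {ℓ r : ℝ} {d : ℕ}

lemma qstar_linbound (hℓ : 0 < ℓ) (hℓr : ℓ < r) :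
    ∃ C : ℝ, 0 ≤ C ∧ ∀ x, 0 ≤ x → Qstar ℓ r d x ≤ C * x := by
  have hrl : (0:ℝ) < r - ℓ := by linarith
  set M := (r + ℓ) / (r - ℓ) with hM_def
  have hM : 1 ≤ M := le_of_lt (u0_gt_one hℓ hℓr)
  obtain ⟨L, hL0, hLd, -⟩ := cheb_lip M hM d
  set δ := cDelta ℓ r d with hδ_def
  have hδpos : 0 < δ := delta_pos hℓ hℓr
  have hδ1 : δ ≤ 1 := delta_le_one hℓ hℓr
  have hδT : δ * cheb d M = 1 := delta_mul_T hℓ hℓr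
  refine ⟨max (δ * L * (2 / (r - ℓ))) ((1 - δ) / ℓ), ?_, ?_⟩
  · apply le_max_of_le_left; positivity
  · intro x hx
    rcases le_or_gt x ℓ with hxl | hxl
    · rw [qstar_eq hℓ hℓr hxl]
      have hb := psi_bounds hℓ hℓr hx hxl
      have hlip := hLd (psiMap ℓ r x) M hb.1 hb.2 (le_refl M)
      have hdiff : M - psiMap ℓ r x = 2 * x / (r - ℓ) := by
        rw [hM_def, psiMap]
        field_simp
        try ring
      have key : 1 - δ * cheb d (psiMap ℓ r x) ≤ δ * L * (2 / (r - ℓ)) * x := by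
        have h1 : 1 - δ * cheb d (psiMap ℓ r x) = δ * (cheb d M - cheb d (psiMap ℓ r x)) := by
          rw [mul_sub, hδT]
        rw [h1]
        calc δ * (cheb d M - cheb d (psiMap ℓ r x))
            ≤ δ * (L * (M - psiMap ℓ r x)) :=
              mul_le_mul_of_nonneg_left hlip (le_of_lt hδpos)
          _ = δ * L * (2 / (r - ℓ)) * x := by rw [hdiff]; field_simp
      refine le_trans key ?_
      apply mul_le_mul_of_nonneg_right (le_max_left _ _) hx
    · rw [Qstar, if_neg (not_lt.mpr (le_of_lt hxl))]
      have h1 : 1 - δ ≤ (1 - δ) / ℓ * x := by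
        rw [div_mul_eq_mul_div, le_div_iff₀ hℓ]
        nlinarith
      refine le_trans h1 ?_
      apply mul_le_mul_of_nonneg_right (le_max_right _ _) hx
end Linear

lemma pnat_anti (p : ℕ+ → ℝ) (hmono : ∀ i : ℕ+, p (i + 1) ≤ p i) :
    ∀ j i : ℕ+, i ≤ j → p j ≤ p i := by
  intro j
  induction j using PNat.recOn with
  | one => intro i hi; rw [PNat.le_one_iff.mp hi]
  | succ k ih =>
    intro i hi
    rcases eq_or_lt_of_le hi with h | h
    · rw [h]
    · exact le_trans (hmono k) (ih i (PNat.lt_add_one_iff.mp h))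

/-- For a nonincreasing probability distribution `p` over the positive
integers with `p_n > 0` and `μ := Σ_{i>n} p_i`, one has
`Σᵢ Q*(p_i) ≥ (n + μ/p_n)·Q*(p_n)`. -/
theorem Qstar_worst_case (ℓ r : ℝ) (hℓ : 0 < ℓ) (hℓr : ℓ < r) (hr : r ≤ 1)
    (d : ℕ) (hd : 1 ≤ d) (n : ℕ+)
    (p : ℕ+ → ℝ) (hp0 : ∀ i, 0 ≤ p i) (hp1 : ∑' i, p i = 1)
    (hmono : ∀ i : ℕ+, p (i + 1) ≤ p i) (hpn : 0 < p n) :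
    (∑' i, Qstar ℓ r d (p i)) ≥
      ((n : ℝ) + (∑' i, if n < i then p i else 0) / p n) * Qstar ℓ r d (p n) := by
  have hps : Summable p := by
    by_contra h
    rw [tsum_eq_zero_of_not_summable h] at hp1
    norm_num at hp1
  have hanti := pnat_anti p hmono
  obtain ⟨C, hC0, hClin⟩ := qstar_linbound (d := d) hℓ hℓr
  have hf_nonneg : ∀ i, 0 ≤ Qstar ℓ r d (p i) := fun i => qstar_nonneg hℓ hℓr (hp0 i)
  have hf_sum : Summable (fun i => Qstar ℓ r d (p i)) :=
    Summable.of_nonneg_of_le hf_nonneg (fun i => hClin (p i) (hp0 i)) (hps.mul_left C)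
  set c := Qstar ℓ r d (p n) with hc_def
  set h₁ : ℕ+ → ℝ := fun i => if i ≤ n then c else 0 with h1_def
  set h₂ : ℕ+ → ℝ := fun i => if n < i then p i * (c / p n) else 0 with h2_def
  have h1_zero : ∀ i ∉ Finset.Icc 1 n, h₁ i = 0 := by
    intro i hi
    simp only [Finset.mem_Icc] at hi
    push_neg at hi
    rw [h1_def]
    simp only []
    rw [if_neg (fun hc' => absurd (hi i.one_le) (not_lt.mpr hc'))]
  have h1_sum : Summable h₁ := summable_of_ne_finset_zero h1_zero
  have h2_eq : h₂ = fun i => (if n < i then p i else 0) * (c / p n) := by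
    funext i; rw [h2_def]
    by_cases hni : n < i <;> simp [hni]
  have hind_sum : Summable (fun i : ℕ+ => if n < i then p i else 0) := by
    apply Summable.of_nonneg_of_le (fun i => ?_) (fun i => ?_) hps
    · split
      · exact hp0 i
      · exact le_refl 0
    · split
      · exact le_refl _
      · exact hp0 i
  have h2_sum : Summable h₂ := by rw [h2_eq]; exact hind_sum.mul_right _
  have hle : ∀ i, h₁ i + h₂ i ≤ Qstar ℓ r d (p i) := by
    intro i
    rcases le_or_gt i n with hi | hi
    · rw [h1_def, h2_def]
      simp only []
      rw [if_pos hi, if_neg (not_lt.mpr hi)]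
      have : p n ≤ p i := hanti n i hi
      have := qstar_mono (d := d) hℓ hℓr (hp0 n) this
      rw [← hc_def] at this
      linarith
    · rw [h1_def, h2_def]
      simp only []
      rw [if_neg (not_le.mpr hi), if_pos hi]
      have hsl := qstar_superlin (d := d) hℓ hℓr (hp0 i) (hanti i n (le_of_lt hi)) hpn
      rw [← hc_def] at hsl
      have : p i * (c / p n) ≤ Qstar ℓ r d (p i) := by
        rw [mul_div_assoc', div_le_iff₀ hpn]
        nlinarith
      linarith
  have hsum12 : Summable (fun i => h₁ i + h₂ i) := h1_sum.add h2_sum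
  have hmain : ∑' i, (h₁ i + h₂ i) ≤ ∑' i, Qstar ℓ r d (p i) :=
    Summable.tsum_le_tsum hle hsum12 hf_sum
  have ht1 : ∑' i, h₁ i = (n : ℝ) * c := by
    rw [tsum_eq_sum h1_zero]
    have : ∀ i ∈ Finset.Icc 1 n, h₁ i = c := by
      intro i hi
      simp only [Finset.mem_Icc] at hi
      rw [h1_def]; exact if_pos hi.2
    rw [Finset.sum_congr rfl this, Finset.sum_const, PNat.card_Icc]
    simp only [PNat.one_coe, Nat.add_sub_cancel]
    rw [nsmul_eq_mul]
  have ht2 : ∑' i, h₂ i = (∑' i, if n < i then p i else 0) * (c / p n) := by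
    rw [h2_eq]
    exact hind_sum.tsum_mul_right _
  have htot : ∑' i, (h₁ i + h₂ i) = (n : ℝ) * c + (∑' i, if n < i then p i else 0) * (c / p n) := by
    rw [Summable.tsum_add h1_sum h2_sum, ht1, ht2]
  rw [ge_iff_le]
  have hrhs : ((n : ℝ) + (∑' i, if n < i then p i else 0) / p n) * c
      = (n : ℝ) * c + (∑' i, if n < i then p i else 0) * (c / p n) := by
    ring
  rw [hrhs]
  rw [← htot]
  exact hmain
end
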